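/- arXiv:2511.07390 — 4 statements merged into one kernel-verified Lean document; each statement's English description precedes it below -/
import Mathlib

section
/- The solution of the ODE system d/dt p(n,t) = β(t)·n·p(n−1,t) − β(t)·(n+1)·p(n,t) with initial condition p(n,0) = [n=0] is uniquely p(n,t) = α(t)·(1−α(t))^n where α(t) = exp(−∫₀ᵗ β(s) ds). -/
/-!
Both sides of the claimed identity solve the same triangular linear system on `[0, ∞)`: for the
formula this is a direct computation from `α' = -β α`. The difference `d n` of two solutions
satisfies `d n' = β n d (n-1) - (n+1) β d n`, so once `d (n-1)` vanishes (or `n = 0`), the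
integrating factor `exp ((n+1) ∫ β)` makes `d n · exp ((n+1) ∫ β)` constant, hence zero.
-/

theorem eq_zero_of_hasDerivAt_neg_mul_self {c g : ℝ → ℝ} {a : ℝ} (hc : Continuous c)
    (hga : g a = 0) (hg : ∀ s, a ≤ s → HasDerivAt g (-(c s * g s)) s) :
    ∀ t, a ≤ t → g t = 0 := by
  intro t hat
  set E : ℝ → ℝ := fun u => Real.exp (∫ s in a..u, c s)
  have hE : ∀ s, HasDerivAt E (E s * c s) s := fun s =>
    (hc.integral_hasStrictDerivAt a s).hasDerivAt.exp
  have hgE : ∀ s, a ≤ s → HasDerivAt (fun u => g u * E u) 0 s := fun s hs =>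
    ((hg s hs).mul (hE s)).congr_deriv (by ring)
  have hconst : ∀ x ∈ Set.Icc a t, g x * E x = g a * E a :=
    constant_of_has_deriv_right_zero
      (fun x hx => (hgE x hx.1).continuousAt.continuousWithinAt)
      (fun x hx => (hgE x hx.1).hasDerivWithinAt)
  have := hconst t ⟨hat, le_rfl⟩
  rw [hga, zero_mul] at this
  exact (mul_eq_zero.mp this).resolve_right (Real.exp_ne_zero _)

/-- In the `n = 0` equation `p (0 - 1)` is `p 0` (truncated subtraction), with coefficient `0`. -/
def IsBirthSolution (β : ℝ → ℝ) (p : ℕ → ℝ → ℝ) : Prop :=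
  ∀ n t, 0 ≤ t → HasDerivAt (p n) (β t * n * p (n - 1) t - β t * (n + 1) * p n t) t

noncomputable def birthProfile (β : ℝ → ℝ) (n : ℕ) (t : ℝ) : ℝ :=
  Real.exp (-∫ s in (0:ℝ)..t, β s) * (1 - Real.exp (-∫ s in (0:ℝ)..t, β s)) ^ n

theorem birthProfile_zero (β : ℝ → ℝ) (n : ℕ) :
    birthProfile β n 0 = if n = 0 then 1 else 0 := by
  simp [birthProfile, zero_pow_eq]

theorem hasDerivAt_mul_one_sub_pow {α : ℝ → ℝ} {b t : ℝ} (hα : HasDerivAt α (-(b * α t)) t)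
    (n : ℕ) :
    HasDerivAt (fun u => α u * (1 - α u) ^ n)
      (b * n * (α t * (1 - α t) ^ (n - 1)) - b * (n + 1) * (α t * (1 - α t) ^ n)) t := by
  have h1 : HasDerivAt (fun u => 1 - α u) (b * α t) t :=
    (hα.const_sub 1).congr_deriv (by ring)
  refine (hα.mul (h1.pow n)).congr_deriv ?_
  cases n with
  | zero => simp
  | succ n => simp only [Nat.add_sub_cancel, Pi.pow_apply]; push_cast; ring

theorem isBirthSolution_birthProfile {β : ℝ → ℝ} (hβ : Continuous β) :
    IsBirthSolution β (birthProfile β) := by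
  intro n t _
  have hα : HasDerivAt (fun u => Real.exp (-∫ s in (0:ℝ)..u, β s))
      (-(β t * Real.exp (-∫ s in (0:ℝ)..t, β s))) t :=
    (hβ.integral_hasStrictDerivAt 0 t).hasDerivAt.neg.exp.congr_deriv
      (by simp only [Pi.neg_apply]; ring)
  exact hasDerivAt_mul_one_sub_pow hα n

theorem IsBirthSolution.eq_of_initial_eq {β : ℝ → ℝ} (hβ : Continuous β) {p q : ℕ → ℝ → ℝ}
    (hp : IsBirthSolution β p) (hq : IsBirthSolution β q) (h0 : ∀ n, p n 0 = q n 0) :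
    ∀ n t, 0 ≤ t → p n t = q n t := by
  have step : ∀ n : ℕ, (∀ s, 0 ≤ s → (n : ℝ) * p (n - 1) s = n * q (n - 1) s) →
      ∀ t, 0 ≤ t → p n t = q n t := by
    intro n hprev t ht
    refine sub_eq_zero.mp (eq_zero_of_hasDerivAt_neg_mul_self (g := fun s => p n s - q n s)
      (c := fun s => ((n : ℝ) + 1) * β s)
      (by fun_prop) (sub_eq_zero.mpr (h0 n)) (fun s hs => ?_) t ht)
    refine ((hp n s hs).sub (hq n s hs)).congr_deriv ?_
    linear_combination β s * hprev s hs
  intro n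
  induction n with
  | zero => exact step 0 (by simp)
  | succ n ih => exact step (n + 1) (fun s hs => by rw [Nat.add_sub_cancel, ih s hs])

theorem birth_ode_unique_solution_general
    (β : ℝ → ℝ) (hβc : Continuous β)
    (p : ℕ → ℝ → ℝ)
    (hinit : ∀ n : ℕ, p n 0 = if n = 0 then 1 else 0)
    (hode : ∀ (n : ℕ) (t : ℝ),
      HasDerivAt (p n) (β t * n * p (n - 1) t - β t * (n + 1) * p n t) t) :
    ∀ (n : ℕ) (t : ℝ), 0 ≤ t →
      p n t = Real.exp (-∫ s in (0:ℝ)..t, β s) *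
        (1 - Real.exp (-∫ s in (0:ℝ)..t, β s)) ^ n :=
  IsBirthSolution.eq_of_initial_eq hβc (fun n t _ => hode n t) (isBirthSolution_birthProfile hβc)
    (fun n => (hinit n).trans (birthProfile_zero β n).symm)

/-- The solution of the ODE system
`d/dt p(n,t) = β(t)·n·p(n−1,t) − β(t)·(n+1)·p(n,t)` with initial condition
`p(n,0) = [n = 0]` is uniquely `p(n,t) = α(t)·(1−α(t))^n`,
where `α(t) = exp(−∫₀ᵗ β(s) ds)`: any differentiable family of functions satisfying
the system agrees with this formula. -/
theorem birth_ode_unique_solution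
    (β : ℝ → ℝ) (hβc : Continuous β) (hβ0 : ∀ t, 0 ≤ β t)
    (p : ℕ → ℝ → ℝ)
    (hinit : ∀ n : ℕ, p n 0 = if n = 0 then 1 else 0)
    (hode : ∀ (n : ℕ) (t : ℝ),
      HasDerivAt (p n) (β t * n * p (n - 1) t - β t * (n + 1) * p n t) t) :
    ∀ (n : ℕ) (t : ℝ), 0 ≤ t →
      p n t = Real.exp (-∫ s in (0:ℝ)..t, β s) *
        (1 - Real.exp (-∫ s in (0:ℝ)..t, β s)) ^ n :=
  birth_ode_unique_solution_general β hβc p hinit hode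
end

section
/- With the insertion noising process, the conditional probability that the sequence just before the last insertion was Y (a single-deletion of X_t) satisfies p(prev(X_t) = Y | X₀, X_t, M_t) = ali(X₀, Y) / (M_t · ali(X₀, X_t)), where the probability of a specific deletion at a position is counted once per position. -/
/-!
The letter weights cancel, since `∏ π(X_t) = π(X_t^{(j)}) · ∏ π(Y)`, and the prior
normalisations combine through `C(L+m, L) · (L+m+1) = C(L+m+1, L) · (m+1)`.
-/

open Finset

/-- Number of subsequence embeddings of `X₀` into `X`. -/
noncomputable def ali {B : Type*} {L N : ℕ} (X₀ : Fin L → B) (X : Fin N → B) : ℕ :=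
  Nat.card {f : Fin L → Fin N // StrictMono f ∧ ∀ i, X (f i) = X₀ i}

theorem cast_choose_add_mul_succ {R : Type*} [CommSemiring R] (L m : ℕ) :
    ((L + m).choose L : R) * (L + m + 1) = ((L + (m + 1)).choose L : R) * (m + 1) := by
  have h := Nat.choose_mul_succ_eq (L + m) L
  rw [show L + m + 1 - L = m + 1 by omega] at h
  rw [← add_assoc]
  simpa using congrArg (Nat.cast : ℕ → R) h

theorem bayes_ratio_eq {K : Type*} [Field K] {c₁ c₂ n k a A p q r : K}
    (hc : c₁ * n = c₂ * k) (hc₁ : c₁ ≠ 0) (hn : n ≠ 0) (hp : p ≠ 0) (hq : q ≠ 0) (hr : r ≠ 0) :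
    c₁⁻¹ * a * (q / r) * (p * n⁻¹) / (c₂⁻¹ * A * (p * q / r)) = a / (k * A) := by
  have hc₂ : c₂ ≠ 0 := by rintro rfl; simp_all
  have hk : k ≠ 0 := by rintro rfl; simp_all
  rcases eq_or_ne A 0 with rfl | hA
  · simp
  field_simp
  linear_combination -a * hc

/-- The left-hand side is `p(Y | X₀, M_t - 1) · π(X_t^{(j)}) · (L + M_t)⁻¹ / p(X_t | X₀, M_t)`
with `M_t = m + 1`. -/
theorem prev_insertion_posterior_general
    {B : Type*} (π : B → ℝ) (hπpos : ∀ b, 0 < π b)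
    (L m : ℕ) (X₀ : Fin L → B)
    (X : Fin (L + (m + 1)) → B) (j : Fin (L + (m + 1)))
    (Y : Fin (L + m) → B) (hY : Y = fun i => X (j.succAbove i)) :
    (((L + m).choose L : ℝ)⁻¹ * (ali X₀ Y : ℝ) * ((∏ i, π (Y i)) / ∏ i, π (X₀ i)))
        * (π (X j) * ((L + m + 1 : ℝ))⁻¹)
      / (((L + (m + 1)).choose L : ℝ)⁻¹ * (ali X₀ X : ℝ) *
          ((∏ i, π (X i)) / ∏ i, π (X₀ i)))
      = (ali X₀ Y : ℝ) / ((m + 1 : ℝ) * (ali X₀ X : ℝ)) := by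
  have hprod : ∏ i, π (X i) = π (X j) * ∏ i, π (Y i) := by
    subst hY
    exact Fin.prod_univ_succAbove (fun i => π (X i)) j
  rw [hprod]
  exact bayes_ratio_eq (cast_choose_add_mul_succ L m)
    (by exact_mod_cast (Nat.choose_pos (by omega)).ne') (by positivity) (hπpos _).ne'
    (prod_pos fun i _ => hπpos _).ne' (prod_pos fun i _ => hπpos _).ne'

/-- Backward transition probability of the insertion noising process: with
`p(X | X₀, M) = C(L+M, L)⁻¹·ali(X₀, X)·∏π(X)/∏π(X₀)` and the forward step from `Y` to
`X_t` inserting a letter from `π` at one of the `L+M_t` positions uniformly (counted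
once per position), the conditional probability that the sequence just before the last
insertion was `Y = X_t^{(−j)}` is
`p(Y | X₀, M−1)·π(X_t^{(j)})·(L+M_t)⁻¹ / p(X_t | X₀, M_t) = ali(X₀, Y)/(M_t·ali(X₀, X_t))`. -/
theorem prev_insertion_posterior
    {B : Type*} (π : B → ℝ) (hπpos : ∀ b, 0 < π b)
    (L m : ℕ) (X₀ : Fin L → B)
    (X : Fin (L + (m + 1)) → B) (j : Fin (L + (m + 1)))
    (Y : Fin (L + m) → B) (hY : Y = fun i => X (j.succAbove i))
    (hali : ali X₀ X ≠ 0) :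
    (((L + m).choose L : ℝ)⁻¹ * (ali X₀ Y : ℝ) * ((∏ i, π (Y i)) / ∏ i, π (X₀ i)))
        * (π (X j) * ((L + m + 1 : ℝ))⁻¹)
      / (((L + (m + 1)).choose L : ℝ)⁻¹ * (ali X₀ X : ℝ) *
          ((∏ i, π (X i)) / ∏ i, π (X₀ i)))
      = (ali X₀ Y : ℝ) / ((m + 1 : ℝ) * (ali X₀ X : ℝ)) :=
  prev_insertion_posterior_general π hπpos L m X₀ X j Y hY
end

section
/- Double-counting identity for subsequence embeddings: for words X₀ of length L and X of length L+M over any alphabet, Σ_{j=1}^{L+M} ali(X₀, X^{(−j)}) = M · ali(X₀, X), where ali(U,V) is the number of occurrences of U as a subsequence of V and X^{(−j)} is X with the j-th letter removed. -/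
open Finset

section aux

variable {B : Type*} {L m : ℕ} (X₀ : Fin L → B) (X : Fin (L + (m + 1)) → B)

/-- For each `j`, embeddings into the deleted word correspond to embeddings into `X`
avoiding `j`. -/
noncomputable def aliDelEquiv (j : Fin (L + (m + 1))) :
    {g : Fin L → Fin (L + m) // StrictMono g ∧ ∀ i, X (j.succAbove (g i)) = X₀ i} ≃
      {f : Fin L → Fin (L + (m + 1)) //
        (StrictMono f ∧ ∀ i, X (f i) = X₀ i) ∧ ∀ i, f i ≠ j} where
  toFun g := ⟨fun i => j.succAbove (g.1 i),
    ⟨⟨(Fin.strictMono_succAbove j).comp g.2.1, g.2.2⟩, fun i => Fin.succAbove_ne j (g.1 i)⟩⟩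
  invFun f := by
    refine ⟨fun i => (finSuccAboveEquiv j).symm ⟨f.1 i, f.2.2 i⟩, ?_, ?_⟩
    · have key : ∀ i, j.succAbove ((finSuccAboveEquiv j).symm ⟨f.1 i, f.2.2 i⟩) = f.1 i := by
        intro i
        have := (finSuccAboveEquiv j).apply_symm_apply ⟨f.1 i, f.2.2 i⟩
        rw [finSuccAboveEquiv_apply] at this
        exact congrArg Subtype.val this
      intro a b hab
      have := f.2.1.1 hab
      rw [← key a, ← key b] at this
      exact (Fin.strictMono_succAbove j).lt_iff_lt.mp this
    · intro i
      have := (finSuccAboveEquiv j).apply_symm_apply ⟨f.1 i, f.2.2 i⟩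
      rw [finSuccAboveEquiv_apply] at this
      have hv : j.succAbove ((finSuccAboveEquiv j).symm ⟨f.1 i, f.2.2 i⟩) = f.1 i :=
        congrArg Subtype.val this
      rw [hv]
      exact f.2.1.2 i
  left_inv g := by
    refine Subtype.ext (funext fun i => ?_)
    exact (Equiv.symm_apply_eq _).mpr (finSuccAboveEquiv_apply j (g.1 i)).symm
  right_inv f := by
    refine Subtype.ext (funext fun i => ?_)
    have := (finSuccAboveEquiv j).apply_symm_apply ⟨f.1 i, f.2.2 i⟩
    rw [finSuccAboveEquiv_apply] at this
    exact congrArg Subtype.val this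

end aux

/-- Double-counting identity for subsequence embeddings: for words `X₀` of length `L`
and `X` of length `L+M` over any alphabet,
`Σ_{j=1}^{L+M} ali(X₀, X^{(−j)}) = M · ali(X₀, X)`,
where `X^{(−j)}` is `X` with the `j`-th letter removed. -/
theorem ali_delete_double_count
    {B : Type*} (L m : ℕ) (X₀ : Fin L → B) (X : Fin (L + (m + 1)) → B) :
    ∑ j : Fin (L + (m + 1)),
        ali X₀ (fun i : Fin (L + m) => X (j.succAbove i)) = (m + 1) * ali X₀ X := by
  classical
  set P : (Fin L → Fin (L + (m + 1))) → Prop :=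
    fun f => StrictMono f ∧ ∀ i, X (f i) = X₀ i with hP
  have hali : ali X₀ X = (univ.filter P).card := by
    rw [ali, Nat.card_eq_fintype_card, Fintype.card_subtype]
  have hstep : ∀ j : Fin (L + (m + 1)),
      ali X₀ (fun i : Fin (L + m) => X (j.succAbove i)) =
        (univ.filter (fun f => P f ∧ ∀ i, f i ≠ j)).card := by
    intro j
    rw [ali, Nat.card_congr (aliDelEquiv X₀ X j), Nat.card_eq_fintype_card,
      Fintype.card_subtype]
  calc ∑ j : Fin (L + (m + 1)), ali X₀ (fun i : Fin (L + m) => X (j.succAbove i))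
      = ∑ j : Fin (L + (m + 1)),
          (univ.filter (fun f => P f ∧ ∀ i, f i ≠ j)).card := by
        exact Finset.sum_congr rfl fun j _ => hstep j
    _ = ∑ j : Fin (L + (m + 1)), ∑ f ∈ univ.filter P,
          (if ∀ i, f i ≠ j then 1 else 0) := by
        refine Finset.sum_congr rfl fun j _ => ?_
        rw [Finset.card_filter, Finset.sum_filter]
        refine Finset.sum_congr rfl fun f _ => ?_
        by_cases h : P f
        · rw [if_pos h]
          by_cases h2 : ∀ i, f i ≠ j
          · rw [if_pos ⟨h, h2⟩, if_pos h2]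
          · rw [if_neg fun hc => h2 hc.2, if_neg h2]
        · rw [if_neg h, if_neg fun hc => h hc.1]
    _ = ∑ f ∈ univ.filter P, ∑ j : Fin (L + (m + 1)),
          (if ∀ i, f i ≠ j then 1 else 0) := Finset.sum_comm
    _ = ∑ f ∈ univ.filter P, (m + 1) := by
        refine Finset.sum_congr rfl fun f hf => ?_
        have hfP : P f := (Finset.mem_filter.mp hf).2
        have hinj : Function.Injective f := hfP.1.injective
        have : ∑ j : Fin (L + (m + 1)), (if ∀ i, f i ≠ j then 1 else 0)
            = (univ.filter (fun j => ∀ i, f i ≠ j)).card := by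
          rw [Finset.card_filter]
        rw [this]
        have heq : univ.filter (fun j : Fin (L + (m + 1)) => ∀ i, f i ≠ j)
            = (Finset.image f univ)ᶜ := by
          ext j
          simp [eq_comm]
        rw [heq, Finset.card_compl, Finset.card_image_of_injective _ hinj]
        simp
    _ = (m + 1) * ali X₀ X := by
        rw [Finset.sum_const, hali, smul_eq_mul, mul_comm]
end

section
/- As the number of insertions M → ∞, the KL divergence between the insertion-noised distribution p(X | X₀, M) and the i.i.d. product distribution q over sequences of length L+M vanishes: KL(p(·|X₀,M) ‖ π^{⊗(L+M)}) → 0. -/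
open Finset Filter

/-!
Write `p = p(· | X₀, M)`, `q = π^⊗(L+M)`, `P = ∏ π(X₀ i)` and `C = C(L+M, L)`. Since
`log x ≤ x - 1`, the divergence is squeezed between `0` (Gibbs) and `χ²(p ‖ q) = ∑ p²/q - 1`,
and `∑ p²/q = (C P)⁻² ∑_X ali(X₀, X)² q(X)` is a second moment. Expanding `ali²` as a sum over
pairs of placements `f, g` of `X₀`, a pair with disjoint ranges constrains disjoint coordinates
of `X`, so it contributes exactly `P²`, and any other pair at most `P`. Exactly `C·C(M, L)` of
the `C²` pairs are disjoint, whence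
`0 ≤ KL(p ‖ q) ≤ (P⁻¹ - 1) (1 - C(M, L) / C(L+M, L))`, which tends to `0` since
`C(M, L) ~ C(L+M, L) ~ M^L / L!`.
-/

open Function Asymptotics

section KL
variable {α : Type*} [Fintype α] {p q : α → ℝ}

theorem sum_mul_log_div_nonneg (hp : ∀ x, 0 ≤ p x) (hq : ∀ x, 0 < q x) (hsp : ∑ x, p x = 1)
    (hsq : ∑ x, q x = 1) : 0 ≤ ∑ x, p x * Real.log (p x / q x) := by
  have hterm : ∀ x, q x * InformationTheory.klFun (p x / q x)
      = p x * Real.log (p x / q x) + (q x - p x) := by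
    intro x
    have := (hq x).ne'
    rw [InformationTheory.klFun_apply]
    field_simp
    ring
  calc 0 ≤ ∑ x, q x * InformationTheory.klFun (p x / q x) :=
        sum_nonneg fun x _ => mul_nonneg (hq x).le
          (InformationTheory.klFun_nonneg (div_nonneg (hp x) (hq x).le))
    _ = ∑ x, p x * Real.log (p x / q x) := by
        simp only [hterm, sum_add_distrib, sum_sub_distrib, hsp, hsq, sub_self, add_zero]

theorem sum_mul_log_div_le_sum_sq_div_sub_one (hp : ∀ x, 0 ≤ p x) (hq : ∀ x, 0 < q x)
    (hsp : ∑ x, p x = 1) : ∑ x, p x * Real.log (p x / q x) ≤ ∑ x, p x ^ 2 / q x - 1 := by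
  have hterm : ∀ x, p x * Real.log (p x / q x) ≤ p x ^ 2 / q x - p x := by
    intro x
    obtain hpx | hpx := (hp x).eq_or_lt
    · simp [← hpx]
    · calc p x * Real.log (p x / q x) ≤ p x * (p x / q x - 1) :=
            mul_le_mul_of_nonneg_left (Real.log_le_sub_one_of_pos (div_pos hpx (hq x))) hpx.le
        _ = p x ^ 2 / q x - p x := by ring
  calc ∑ x, p x * Real.log (p x / q x) ≤ ∑ x, (p x ^ 2 / q x - p x) :=
        sum_le_sum fun x _ => hterm x
    _ = ∑ x, p x ^ 2 / q x - 1 := by rw [sum_sub_distrib, hsp]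

end KL

section ProductWeight
variable {B κ ι : Type*} [Fintype B] [Fintype κ] [Fintype ι] {π : B → ℝ}

theorem sum_prod_apply_eq_one [DecidableEq κ] (hπ1 : ∑ b, π b = 1) :
    ∑ X : κ → B, ∏ j, π (X j) = 1 := by
  rw [← Fintype.prod_sum (fun (_ : κ) b => π b)]
  simp [hπ1]

theorem sum_ite_comp_eq [DecidableEq κ] [DecidableEq B] (hπ1 : ∑ b, π b = 1) {h : ι → κ}
    (hh : Injective h) (a : ι → B) :
    ∑ X : κ → B, (if X ∘ h = a then ∏ j, π (X j) else 0) = ∏ i, π (a i) := by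
  have hfiber : ∀ j, ∑ b, (if ∀ i, h i = j → b = a i then π b else 0)
      = ∏ i ∈ univ.filter (h · = j), π (a i) := by
    intro j
    by_cases hj : ∃ i, h i = j
    · obtain ⟨i, rfl⟩ := hj
      have hfib : univ.filter (h · = h i) = {i} := by ext; simp [hh.eq_iff]
      simp [hfib, hh.eq_iff]
    · push Not at hj
      simp [hj, hπ1]
  calc ∑ X : κ → B, (if X ∘ h = a then ∏ j, π (X j) else 0)
      = ∑ X : κ → B, ∏ j, (if ∀ i, h i = j → X j = a i then π (X j) else 0) := by
        refine sum_congr rfl fun X _ => ?_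
        rw [Fintype.prod_ite_zero]
        congr 1
        simp only [funext_iff, comp_apply]
        exact propext ⟨fun H j i hi => hi ▸ H i, fun H i => H _ i rfl⟩
    _ = ∏ j, ∑ b, (if ∀ i, h i = j → b = a i then π b else 0) :=
        (Fintype.prod_sum fun j b => if ∀ i, h i = j → b = a i then π b else 0).symm
    _ = ∏ i, π (a i) := by rw [prod_congr rfl fun j _ => hfiber j, prod_fiberwise]

theorem sum_ite_comp_eq_and_comp_eq [DecidableEq κ] [DecidableEq B] {ι' : Type*} [Fintype ι']
    (hπ1 : ∑ b, π b = 1) {f : ι → κ} {g : ι' → κ} (hf : Injective f) (hg : Injective g)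
    (hfg : ∀ i j, f i ≠ g j) (a : ι → B) (b : ι' → B) :
    ∑ X : κ → B, (if X ∘ f = a ∧ X ∘ g = b then ∏ j, π (X j) else 0)
      = (∏ i, π (a i)) * ∏ i, π (b i) := by
  simpa [funext_iff, Fintype.prod_sum_type, Sum.forall] using
    sum_ite_comp_eq hπ1 (hf.sumElim hg hfg) (Sum.elim a b)

theorem sum_ite_comp_eq_and_comp_eq_le [DecidableEq κ] [DecidableEq B] (hπ0 : ∀ b, 0 ≤ π b)
    (hπ1 : ∑ b, π b = 1) {f g : ι → κ} [Decidable (∀ i j, f i ≠ g j)] (hf : Injective f)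
    (hg : Injective g) (a : ι → B) :
    ∑ X : κ → B, (if X ∘ f = a ∧ X ∘ g = a then ∏ j, π (X j) else 0)
      ≤ if ∀ i j, f i ≠ g j then (∏ i, π (a i)) ^ 2 else ∏ i, π (a i) := by
  split_ifs with hfg
  · rw [sq, sum_ite_comp_eq_and_comp_eq hπ1 hf hg hfg]
  · refine (sum_le_sum fun X _ => ?_).trans_eq (sum_ite_comp_eq hπ1 hf a)
    split_ifs with h₁ h₂
    exacts [le_rfl, absurd h₁.1 h₂, prod_nonneg fun j _ => hπ0 _, le_rfl]

end ProductWeight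

section StrictMono
variable {α : Type*} [LinearOrder α] [Fintype α]

theorem card_strictMono_forall_mem_eq_choose (L : ℕ) (T : Finset α) :
    #{g : Fin L → α | StrictMono g ∧ ∀ i, g i ∈ T} = (#T).choose L := by
  let e : {g : Fin L → α // StrictMono g ∧ ∀ i, g i ∈ T} ≃ (Fin L ↪o T) :=
    { toFun g := OrderEmbedding.ofStrictMono (fun i => ⟨g.1 i, g.2.2 i⟩) fun _ _ h => g.2.1 h
      invFun e := ⟨fun i => e i, (Subtype.strictMono_coe _).comp e.strictMono, fun i => (e i).2⟩
      left_inv _ := rfl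
      right_inv _ := rfl }
  rw [← Fintype.card_subtype, ← Nat.card_eq_fintype_card,
    Nat.card_congr (e.trans Set.powersetCard.ofFinEmbEquiv), Set.powersetCard.card,
    Nat.card_eq_fintype_card, Fintype.card_coe]

theorem card_strictMono_eq_choose (L N : ℕ) :
    #{g : Fin L → Fin N | StrictMono g} = N.choose L := by
  simpa using card_strictMono_forall_mem_eq_choose L (univ : Finset (Fin N))

theorem card_strictMono_forall_ne_eq_choose {L N : ℕ} {f : Fin L → Fin N} (hf : Injective f) :
    #{g : Fin L → Fin N | StrictMono g ∧ ∀ i j, f i ≠ g j} = (N - L).choose L := by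
  have := card_strictMono_forall_mem_eq_choose L (univ.image f)ᶜ
  rw [card_compl, card_image_of_injective _ hf, card_univ, Fintype.card_fin,
    Fintype.card_fin] at this
  rw [← this]
  congr! 3 with g
  simpa using forall_comm

end StrictMono

section Alignment
variable {B : Type*} {L N : ℕ}

theorem ali_eq_sum_ite [DecidableEq B] (X₀ : Fin L → B) (X : Fin N → B) :
    (ali X₀ X : ℝ) = ∑ f ∈ {f : Fin L → Fin N | StrictMono f}, if X ∘ f = X₀ then 1 else 0 := by
  rw [sum_boole, filter_filter, ali, Nat.card_eq_fintype_card, Fintype.card_subtype]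
  simp [funext_iff]

variable [Fintype B] {π : B → ℝ}

theorem sum_ali_mul_prod (hπ1 : ∑ b, π b = 1) (X₀ : Fin L → B) :
    ∑ X : Fin N → B, (ali X₀ X : ℝ) * ∏ j, π (X j) = N.choose L * ∏ i, π (X₀ i) := by
  classical
  simp_rw [ali_eq_sum_ite, sum_mul, ite_mul, one_mul, zero_mul]
  rw [sum_comm, sum_congr rfl fun f hf => sum_ite_comp_eq hπ1 (mem_filter.1 hf).2.injective X₀,
    sum_const, card_strictMono_eq_choose, nsmul_eq_mul]

theorem sum_sq_ali_mul_prod_le (hπ0 : ∀ b, 0 ≤ π b) (hπ1 : ∑ b, π b = 1) (X₀ : Fin L → B) :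
    ∑ X : Fin N → B, (ali X₀ X : ℝ) ^ 2 * ∏ j, π (X j)
      ≤ N.choose L * ((N - L).choose L * (∏ i, π (X₀ i)) ^ 2
          + (N.choose L - (N - L).choose L) * ∏ i, π (X₀ i)) := by
  classical
  set P := ∏ i, π (X₀ i)
  set S : Finset (Fin L → Fin N) := {f | StrictMono f}
  have hrow : ∀ f ∈ S, ∑ g ∈ S, (if ∀ i j, f i ≠ g j then P ^ 2 else P)
      = (N - L).choose L * P ^ 2 + (N.choose L - (N - L).choose L) * P := by
    intro f hf
    have hdisj : #{g ∈ S | ∀ i j, f i ≠ g j} = (N - L).choose L := by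
      rw [filter_filter, card_strictMono_forall_ne_eq_choose (mem_filter.1 hf).2.injective]
    have hsplit := card_filter_add_card_filter_not (s := S) (fun g => ∀ i j, f i ≠ g j)
    rw [hdisj, card_strictMono_eq_choose] at hsplit
    rw [sum_ite, sum_const, sum_const, nsmul_eq_mul, nsmul_eq_mul, hdisj, ← hsplit]
    push_cast
    ring
  calc ∑ X : Fin N → B, (ali X₀ X : ℝ) ^ 2 * ∏ j, π (X j)
      = ∑ f ∈ S, ∑ g ∈ S, ∑ X : Fin N → B,
          (if X ∘ f = X₀ ∧ X ∘ g = X₀ then ∏ j, π (X j) else 0) := by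
        simp_rw [sq, ali_eq_sum_ite, sum_mul_sum, sum_mul, ite_zero_mul_ite_zero, one_mul,
          ite_mul, one_mul, zero_mul]
        rw [sum_comm]
        exact sum_congr rfl fun f _ => sum_comm
    _ ≤ ∑ f ∈ S, ∑ g ∈ S, if ∀ i j, f i ≠ g j then P ^ 2 else P :=
        sum_le_sum fun f hf => sum_le_sum fun g hg => sum_ite_comp_eq_and_comp_eq_le hπ0 hπ1
          (mem_filter.1 hf).2.injective (mem_filter.1 hg).2.injective X₀
    _ = _ := by rw [sum_congr rfl hrow, sum_const, card_strictMono_eq_choose, nsmul_eq_mul]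

end Alignment

theorem tendsto_choose_div_choose_add (L : ℕ) :
    Tendsto (fun M : ℕ => (M.choose L : ℝ) / (L + M).choose L) atTop (nhds 1) := by
  have hshift : (fun M : ℕ => ((L + M : ℕ) : ℝ)) ~[atTop] fun M => (M : ℝ) := by
    simpa using IsEquivalent.refl.const_add_of_norm_tendsto_atTop (c := (L : ℝ))
      (tendsto_norm_atTop_atTop.comp tendsto_natCast_atTop_atTop)
  have hM : (fun M : ℕ => (M.choose L : ℝ)) ~[atTop] fun M => (M : ℝ) ^ L / L.factorial :=
    isEquivalent_choose L
  have hLM : (fun M : ℕ => ((L + M).choose L : ℝ)) ~[atTop]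
      fun M => ((L + M : ℕ) : ℝ) ^ L / L.factorial :=
    (isEquivalent_choose L).comp_tendsto (tendsto_atTop_mono (Nat.le_add_left · L) tendsto_id)
  have h : (fun M : ℕ => (M.choose L : ℝ)) ~[atTop] fun M => ((L + M).choose L : ℝ) :=
    hM.trans (((hshift.pow L).div IsEquivalent.refl).symm.trans hLM.symm)
  exact (isEquivalent_iff_tendsto_one (Eventually.of_forall fun M =>
    Nat.cast_ne_zero.2 (Nat.choose_pos (Nat.le_add_right L M)).ne')).1 h

section InsertionLaw
variable {B : Type*} {π : B → ℝ} {L : ℕ}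

/-- The insertion-noised law `p(· | X₀, M)`. -/
noncomputable def insertionLaw (π : B → ℝ) (X₀ : Fin L → B) (M : ℕ) (X : Fin (L + M) → B) :
    ℝ :=
  ((L + M).choose L : ℝ)⁻¹ * ali X₀ X * ((∏ j, π (X j)) / ∏ i, π (X₀ i))

theorem insertionLaw_nonneg (hπ0 : ∀ b, 0 ≤ π b) (X₀ : Fin L → B) (M : ℕ)
    (X : Fin (L + M) → B) : 0 ≤ insertionLaw π X₀ M X :=
  mul_nonneg (by positivity)
    (div_nonneg (prod_nonneg fun _ _ => hπ0 _) (prod_nonneg fun _ _ => hπ0 _))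

theorem insertionLaw_eq_ali_mul_prod (X₀ : Fin L → B) (M : ℕ) (X : Fin (L + M) → B) :
    insertionLaw π X₀ M X
      = ((L + M).choose L : ℝ)⁻¹ * (∏ i, π (X₀ i))⁻¹ * (ali X₀ X * ∏ j, π (X j)) := by
  rw [insertionLaw, div_eq_mul_inv]
  ring

theorem sum_insertionLaw [Fintype B] (hπpos : ∀ b, 0 < π b) (hπ1 : ∑ b, π b = 1)
    (X₀ : Fin L → B) (M : ℕ) : ∑ X, insertionLaw π X₀ M X = 1 := by
  have hC : ((L + M).choose L : ℝ) ≠ 0 := mod_cast (Nat.choose_pos (Nat.le_add_right L M)).ne'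
  have hP : ∏ i, π (X₀ i) ≠ 0 := (prod_pos fun i _ => hπpos _).ne'
  simp_rw [insertionLaw_eq_ali_mul_prod, ← mul_sum, sum_ali_mul_prod hπ1]
  field_simp

theorem sum_sq_insertionLaw_div_le [Fintype B] (hπpos : ∀ b, 0 < π b) (hπ1 : ∑ b, π b = 1)
    (X₀ : Fin L → B) (M : ℕ) :
    ∑ X, insertionLaw π X₀ M X ^ 2 / ∏ j, π (X j)
      ≤ 1 + ((∏ i, π (X₀ i))⁻¹ - 1) * (1 - M.choose L / (L + M).choose L) := by
  have hC : ((L + M).choose L : ℝ) ≠ 0 := mod_cast (Nat.choose_pos (Nat.le_add_right L M)).ne'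
  have hP : ∏ i, π (X₀ i) ≠ 0 := (prod_pos fun i _ => hπpos _).ne'
  calc ∑ X, insertionLaw π X₀ M X ^ 2 / ∏ j, π (X j)
      = ((L + M).choose L : ℝ)⁻¹ ^ 2 * (∏ i, π (X₀ i))⁻¹ ^ 2 *
          ∑ X : Fin (L + M) → B, (ali X₀ X : ℝ) ^ 2 * ∏ j, π (X j) := by
        rw [mul_sum]
        refine sum_congr rfl fun X _ => ?_
        have : ∏ j, π (X j) ≠ 0 := (prod_pos fun j _ => hπpos _).ne'
        rw [insertionLaw_eq_ali_mul_prod]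
        field_simp
    _ ≤ ((L + M).choose L : ℝ)⁻¹ ^ 2 * (∏ i, π (X₀ i))⁻¹ ^ 2 *
          ((L + M).choose L * (M.choose L * (∏ i, π (X₀ i)) ^ 2
            + ((L + M).choose L - M.choose L) * ∏ i, π (X₀ i))) := by
        gcongr
        simpa using sum_sq_ali_mul_prod_le (N := L + M) (fun b => (hπpos b).le) hπ1 X₀
    _ = _ := by
        field_simp
        ring

end InsertionLaw

/-- As the number of insertions `M → ∞`, the KL divergence between the
insertion-noised distribution `p(X | X₀, M) = C(L+M, L)⁻¹·ali(X₀, X)·∏π(X)/∏π(X₀)`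
and the i.i.d. product distribution `q = π^⊗(L+M)` vanishes:
`KL(p(·|X₀,M) ‖ π^⊗(L+M)) → 0`. -/
theorem kl_insertion_noise_tendsto_zero
    {B : Type*} [Fintype B] (π : B → ℝ) (hπpos : ∀ b, 0 < π b) (hπ1 : ∑ b, π b = 1)
    (L : ℕ) (X₀ : Fin L → B) :
    Tendsto (fun M : ℕ =>
      ∑ X : Fin (L + M) → B,
        (((L + M).choose L : ℝ)⁻¹ * (ali X₀ X : ℝ) *
            ((∏ j, π (X j)) / ∏ i, π (X₀ i))) *
          Real.log
            ((((L + M).choose L : ℝ)⁻¹ * (ali X₀ X : ℝ) *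
                ((∏ j, π (X j)) / ∏ i, π (X₀ i))) / ∏ j, π (X j)))
      atTop (nhds 0) := by
  change Tendsto (fun M : ℕ => ∑ X : Fin (L + M) → B,
    insertionLaw π X₀ M X * Real.log (insertionLaw π X₀ M X / ∏ j, π (X j))) atTop (nhds 0)
  have hp : ∀ M (X : Fin (L + M) → B), 0 ≤ insertionLaw π X₀ M X :=
    insertionLaw_nonneg (fun b => (hπpos b).le) X₀
  have hq : ∀ M (X : Fin (L + M) → B), 0 < ∏ j, π (X j) := fun M X => prod_pos fun j _ => hπpos _
  have hbound : Tendsto (fun M : ℕ =>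
      ((∏ i, π (X₀ i))⁻¹ - 1) * (1 - M.choose L / (L + M).choose L)) atTop (nhds 0) := by
    simpa using ((tendsto_choose_div_choose_add L).const_sub 1).const_mul ((∏ i, π (X₀ i))⁻¹ - 1)
  refine squeeze_zero (fun M => ?_) (fun M => ?_) hbound
  · exact sum_mul_log_div_nonneg (hp M) (hq M) (sum_insertionLaw hπpos hπ1 X₀ M)
      (sum_prod_apply_eq_one hπ1)
  · linarith [sum_mul_log_div_le_sum_sq_div_sub_one (hp M) (hq M)
      (sum_insertionLaw hπpos hπ1 X₀ M), sum_sq_insertionLaw_div_le hπpos hπ1 X₀ M]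
end
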